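/- Let A be a locally finite hyperplane arrangement in ℝⁿ, ≺ a valid order of the chambers, and C a chamber with associated flat X_C. Then the subposet N(C) of the Salvetti poset is isomorphic, as a ranked poset, to the face poset of the restricted arrangement A^{X_C} = { H ∩ X_C : H ∈ A, H ⊉ X_C } in X_C; the isomorphism sends ⟨D,F⟩ to F, with inverse sending a face F of A^{X_C} to ⟨C.F, F⟩. -/

import Mathlib

/-!
A cell `⟨D, F⟩` of `S(C)` misses every earlier `S(C')` iff for each `C' ≺ C` some hyperplane
containing `F` separates `C'` from `D`; since `D = C.F` lies on the side of `C` of every such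
hyperplane, this says it separates `C'` from `C`. So `⟨D, F⟩ ∈ N(C)` iff the flat `|F|` lies
in `J(C)`, i.e. iff `F ⊆ X_C`. As `C.F` exists and is unique, `⟨D, F⟩ ↦ F` is a bijection onto
the faces inside `X_C`, and on `N(C)` the Salvetti order is reverse inclusion of faces: two
chambers `C.F` and `C.G` lie on the side of `C` of every hyperplane containing the smaller face.
-/
open Metric Set MeasureTheory

noncomputable section

/-- A locally finite arrangement of affine hyperplanes in ℝⁿ, given by affine
equations `⟪a i, x⟫ = b i` with `a i ≠ 0`, indexed injectively by `ι`. -/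
structure Arrangement (n : ℕ) (ι : Type) where
  a : ι → EuclideanSpace ℝ (Fin n)
  b : ι → ℝ
  ha : ∀ i, a i ≠ 0
  inj : Function.Injective fun i => {x : EuclideanSpace ℝ (Fin n) | (inner ℝ (a i) x : ℝ) = b i}
  locFin : ∀ x : EuclideanSpace ℝ (Fin n), ∃ ε > 0,
    {i : ι | ∃ y ∈ Metric.ball x ε, (inner ℝ (a i) y : ℝ) = b i}.Finite

namespace Arrangement

variable {n : ℕ} {ι : Type} (A : Arrangement n ι)

/-- The defining affine functional of the `i`-th hyperplane. -/
def val (i : ι) (x : EuclideanSpace ℝ (Fin n)) : ℝ := (inner ℝ (A.a i) x : ℝ) - A.b i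

/-- The `i`-th hyperplane. -/
def hyperplane (i : ι) : Set (EuclideanSpace ℝ (Fin n)) := {x | A.val i x = 0}

/-- The sign vector of a point. -/
def signAt (x : EuclideanSpace ℝ (Fin n)) : ι → SignType := fun i => SignType.sign (A.val i x)

/-- The (relatively open) stratum with sign vector `σ`. -/
def openCell (σ : ι → SignType) : Set (EuclideanSpace ℝ (Fin n)) :=
  {x | ∀ i, SignType.sign (A.val i x) = σ i}

/-- The (closed) faces of the arrangement: closures of the strata. -/
def IsFace (F : Set (EuclideanSpace ℝ (Fin n))) : Prop :=
  ∃ x : EuclideanSpace ℝ (Fin n), F = closure (A.openCell (A.signAt x))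

/-- Chambers: closed faces of codimension 0. -/
def IsChamber (C : Set (EuclideanSpace ℝ (Fin n))) : Prop :=
  ∃ x : EuclideanSpace ℝ (Fin n), (∀ i, A.val i x ≠ 0) ∧
    C = closure (A.openCell (A.signAt x))

/-- The support of a subset: the hyperplanes containing it. -/
def supp (U : Set (EuclideanSpace ℝ (Fin n))) : Set ι := {i | U ⊆ A.hyperplane i}

/-- The set of hyperplanes separating two chambers. -/
def sep (C C' : Set (EuclideanSpace ℝ (Fin n))) : Set ι :=
  {i | ∀ x ∈ interior C, ∀ y ∈ interior C', A.val i x * A.val i y < 0}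

/-- `F` is a face of the chamber (or face) `C`. -/
def IsFaceOf (F C : Set (EuclideanSpace ℝ (Fin n))) : Prop := A.IsFace F ∧ F ⊆ C

/-- `A.IsCF C F D` means `D = C.F`: `D` is the unique chamber containing `F` and not
separated from `C` by any hyperplane of `supp F`. -/
def IsCF (C F D : Set (EuclideanSpace ℝ (Fin n))) : Prop :=
  A.IsChamber D ∧ F ⊆ D ∧ A.sep C D ∩ A.supp F = ∅

/-- `A.IsOpp D F E` means `E = D^F`: `E` is the chamber opposite to `D` with respect to
its face `F`, i.e. the hyperplanes separating `D` and `E` are exactly those containing `F`. -/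
def IsOpp (D F E : Set (EuclideanSpace ℝ (Fin n))) : Prop :=
  A.IsChamber E ∧ F ⊆ E ∧ A.sep D E = A.supp F

/-- Flats: nonempty intersections of subfamilies of hyperplanes (including ℝⁿ itself). -/
def IsFlat (X : Set (EuclideanSpace ℝ (Fin n))) : Prop :=
  X.Nonempty ∧ ∃ s : Set ι, X = ⋂ i ∈ s, A.hyperplane i

/-- A cell `⟨C, F⟩` of the Salvetti complex: a chamber `C` together with a face `F` of `C`. -/
structure Cell {n : ℕ} {ι : Type} (𝒜 : Arrangement n ι) where
  C : Set (EuclideanSpace ℝ (Fin n))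
  F : Set (EuclideanSpace ℝ (Fin n))
  isChamber : 𝒜.IsChamber C
  isFace : 𝒜.IsFace F
  faceLe : F ⊆ C

/-- The Salvetti order: `⟨C,F⟩ ≤ ⟨D,G⟩` iff `F ⪯ G` (i.e. `F ⊇ G`) and `D.F = C`. -/
def cellLE (c d : A.Cell) : Prop := d.F ⊆ c.F ∧ A.IsCF d.C c.F c.C

/-- The subcomplex `S(C)`: cells `⟨D,F⟩` with `D = C.F`. -/
def inS (C : Set (EuclideanSpace ℝ (Fin n))) (c : A.Cell) : Prop := A.IsCF C c.F c.C

/-- A strict total order on the chambers. -/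
def IsChamberOrder (lt : Set (EuclideanSpace ℝ (Fin n)) → Set (EuclideanSpace ℝ (Fin n)) → Prop) :
    Prop :=
  (∀ C C', A.IsChamber C → A.IsChamber C' → C ≠ C' → lt C C' ∨ lt C' C) ∧
  (∀ C, ¬ lt C C) ∧
  (∀ C C' C'', lt C C' → lt C' C'' → lt C C'')

/-- The upper ideal `J(C)` of the poset of flats determined by a total order on chambers. -/
def J (lt : Set (EuclideanSpace ℝ (Fin n)) → Set (EuclideanSpace ℝ (Fin n)) → Prop)
    (C : Set (EuclideanSpace ℝ (Fin n))) : Set (Set (EuclideanSpace ℝ (Fin n))) :=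
  {X | A.IsFlat X ∧ ∀ C', A.IsChamber C' → lt C' C → (A.supp X ∩ A.sep C C').Nonempty}

/-- A valid order: for each chamber `C`, the ideal `J(C)` is the principal upper ideal
(in the poset of flats ordered by reverse inclusion) generated by `X_C = |F_C|` for some
face `F_C` of `C`. -/
def IsValidOrder
    (lt : Set (EuclideanSpace ℝ (Fin n)) → Set (EuclideanSpace ℝ (Fin n)) → Prop) : Prop :=
  A.IsChamberOrder lt ∧
  ∀ C, A.IsChamber C → ∃ F_C, A.IsFaceOf F_C C ∧
    A.J lt C = {X | A.IsFlat X ∧ X ⊆ (affineSpan ℝ F_C : Set (EuclideanSpace ℝ (Fin n)))}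

/-- Membership in `N(C)`: cells of `S(C)` not lying in any earlier `S(C')`. -/
def inN (lt : Set (EuclideanSpace ℝ (Fin n)) → Set (EuclideanSpace ℝ (Fin n)) → Prop)
    (C : Set (EuclideanSpace ℝ (Fin n))) (c : A.Cell) : Prop :=
  A.inS C c ∧ ∀ C', A.IsChamber C' → lt C' C → ¬ A.inS C' c

/-- A point `x₀` is generic with respect to `A`: (i) chambers at equal distance from `x₀`
have the same metric projection of `x₀`, lying in their intersection; (ii) distances to
strictly comparable flats are strictly comparable. -/
def IsGeneric (x₀ : EuclideanSpace ℝ (Fin n)) : Prop :=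
  (∀ C C', A.IsChamber C → A.IsChamber C' → infDist x₀ C = infDist x₀ C' →
    ∀ p ∈ C, ∀ p' ∈ C', (∀ q ∈ C, dist x₀ p ≤ dist x₀ q) →
      (∀ q ∈ C', dist x₀ p' ≤ dist x₀ q) → p = p' ∧ p ∈ C ∩ C') ∧
  (∀ L L', A.IsFlat L → A.IsFlat L' → L' ⊂ L → infDist x₀ L < infDist x₀ L')

end Arrangement

open Filter Topology

theorem IsPreconnected.sign_eq {X : Type*} [TopologicalSpace X] {s : Set X}
    (hs : IsPreconnected s) {f : X → ℝ} (hf : ContinuousOn f s) (h0 : ∀ x ∈ s, f x ≠ 0)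
    {x y : X} (hx : x ∈ s) (hy : y ∈ s) : SignType.sign (f x) = SignType.sign (f y) :=
  hs.constant (fun z hz => ((continuousAt_sign_of_ne_zero (h0 z hz)).comp_continuousWithinAt
    (hf z hz))) hx hy

theorem tendsto_add_smul_sub_nhdsGT {E : Type*} [NormedAddCommGroup E] [NormedSpace ℝ E]
    (y x : E) : Tendsto (fun t : ℝ => y + t • (x - y)) (𝓝[>] 0) (𝓝 y) :=
  tendsto_nhdsWithin_of_tendsto_nhds
    (by simpa using (by fun_prop : Continuous fun t : ℝ => y + t • (x - y)).tendsto 0)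

theorem SignType.mul_eq_neg_one_iff_ne {s t : SignType} (hs : s ≠ 0) (ht : t ≠ 0) :
    s * t = -1 ↔ s ≠ t := by
  revert s t
  decide

/-- The composition `σ ∘ τ` of sign vectors, as in oriented matroids. -/
def signCompose {ι : Type} (σ τ : ι → SignType) : ι → SignType :=
  fun i => if σ i = 0 then τ i else σ i

namespace Arrangement

variable {n : ℕ} {ι : Type} (A : Arrangement n ι)

local notation "𝔼" => EuclideanSpace ℝ (Fin n)

theorem continuous_val (i : ι) : Continuous (A.val i) := by
  unfold val
  fun_prop

theorem val_add_smul_sub (i : ι) (y x : 𝔼) (t : ℝ) :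
    A.val i (y + t • (x - y)) = (1 - t) * A.val i y + t * A.val i x := by
  simp only [val, inner_add_right, inner_smul_right, inner_sub_right]
  ring

theorem eventually_sign_val_eq {i : ι} {y : 𝔼} (hy : A.val i y ≠ 0) :
    ∀ᶠ y' in 𝓝 y, SignType.sign (A.val i y') = SignType.sign (A.val i y) := by
  have := (continuousAt_sign_of_ne_zero hy).comp (A.continuous_val i).continuousAt
  rw [ContinuousAt, nhds_discrete SignType, tendsto_pure] at this
  exact this

/-- Only finitely many hyperplanes meet a small ball around `y`; the others keep their sign on
it by connectedness. -/
theorem eventually_forall_sign_val_eq (y : 𝔼) :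
    ∀ᶠ y' in 𝓝 y, ∀ i, A.val i y ≠ 0 →
      SignType.sign (A.val i y') = SignType.sign (A.val i y) := by
  obtain ⟨ε, hε, hfin⟩ := A.locFin y
  have hnear := hfin.eventually_all.2 fun i _ => eventually_imp_distrib_left.2
    fun hy : A.val i y ≠ 0 => A.eventually_sign_val_eq hy
  filter_upwards [hnear, ball_mem_nhds y hε] with y' hnear hy' i hi
  by_cases hmeet : ∃ z ∈ ball y ε, inner ℝ (A.a i) z = A.b i
  · exact hnear i hmeet hi
  · refine (convex_ball y ε).isPreconnected.sign_eq (A.continuous_val i).continuousOn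
      (fun z hz h0 => hmeet ⟨z, hz, ?_⟩) hy' (mem_ball_self hε)
    rwa [val, sub_eq_zero] at h0

theorem isOpen_openCell {σ : ι → SignType} (hσ : ∀ i, σ i ≠ 0) : IsOpen (A.openCell σ) := by
  refine isOpen_iff_mem_nhds.2 fun y hy => ?_
  have hy0 : ∀ i, A.val i y ≠ 0 := fun i h0 => hσ i (by rw [← hy i, h0, sign_zero])
  filter_upwards [A.eventually_forall_sign_val_eq y] with y' hy' i
  rw [hy' i (hy0 i), hy i]

theorem mem_openCell_iff {σ : ι → SignType} {x : 𝔼} : x ∈ A.openCell σ ↔ A.signAt x = σ :=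
  funext_iff.symm

theorem mem_openCell_signAt (x : 𝔼) : x ∈ A.openCell (A.signAt x) := fun _ => rfl

theorem eventually_signAt_add_smul_sub (y x : 𝔼) :
    ∀ᶠ t in 𝓝[>] (0 : ℝ),
      A.signAt (y + t • (x - y)) = signCompose (A.signAt y) (A.signAt x) := by
  filter_upwards [(tendsto_add_smul_sub_nhdsGT y x).eventually (A.eventually_forall_sign_val_eq y),
    self_mem_nhdsWithin] with t hnear (ht : 0 < t)
  funext i
  by_cases hy : A.val i y = 0
  · simp [signCompose, signAt, hy, A.val_add_smul_sub, sign_mul, sign_pos ht]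
  · simp [signCompose, signAt, hy, hnear i hy]

theorem sign_val_of_mem_closure {σ : ι → SignType} {x : 𝔼} (hx : x ∈ closure (A.openCell σ))
    {i : ι} (h0 : A.val i x ≠ 0) : SignType.sign (A.val i x) = σ i := by
  obtain ⟨y, hy, hyσ⟩ := mem_closure_iff_nhds.1 hx _ (A.eventually_sign_val_eq h0)
  exact hy.symm.trans (hyσ i)

theorem isOpenMap_val (i : ι) : IsOpenMap (A.val i) := by
  have hne : innerₛₗ ℝ (A.a i) ≠ 0 := fun h =>
    A.ha i (inner_self_eq_zero.1 (LinearMap.congr_fun h (A.a i)))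
  exact (Homeomorph.subRight (A.b i)).isOpenMap.comp
    ((innerₛₗ ℝ (A.a i)).isOpenMap_of_finiteDimensional (LinearMap.surjective hne))

theorem sign_val_of_mem_interior_closure {σ : ι → SignType} {x : 𝔼}
    (hx : x ∈ interior (closure (A.openCell σ))) {i : ι} (hi : σ i ≠ 0) :
    SignType.sign (A.val i x) = σ i := by
  set U : Set ℝ := {v | SignType.sign v = σ i}
  have hcl : closure (A.openCell σ) ⊆ A.val i ⁻¹' closure U :=
    closure_minimal (fun y hy => subset_closure (hy i))
      (isClosed_closure.preimage (A.continuous_val i))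
  have hU : interior (closure U) = U := by
    rcases hσ : σ i with _ | _ | _
    · exact absurd hσ hi
    · have : U = Iio 0 := by ext v; simp [U, hσ, sign_eq_neg_one_iff]
      rw [this, closure_Iio, interior_Iic]
    · have : U = Ioi 0 := by ext v; simp [U, hσ, sign_eq_one_iff]
      rw [this, closure_Ioi, interior_Ici]
  have := interior_mono hcl hx
  rwa [← (A.isOpenMap_val i).preimage_interior_eq_interior_preimage (A.continuous_val i), hU]
    at this

theorem sep_comm (C D : Set 𝔼) : A.sep C D = A.sep D C := by
  ext i
  exact ⟨fun h x hx y hy => mul_comm (A.val i x) _ ▸ h y hy x hx,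
    fun h x hx y hy => mul_comm (A.val i x) _ ▸ h y hy x hx⟩

theorem mem_sep_iff {x y : 𝔼} (hx : ∀ i, A.val i x ≠ 0) (hy : ∀ i, A.val i y ≠ 0) {i : ι} :
    i ∈ A.sep (closure (A.openCell (A.signAt x))) (closure (A.openCell (A.signAt y))) ↔
      A.signAt x i ≠ A.signAt y i := by
  have hsign : ∀ z, (∀ i, A.val i z ≠ 0) → A.signAt z i ≠ 0 := fun z hz => by
    simpa [signAt] using hz i
  have hint : ∀ z, (∀ i, A.val i z ≠ 0) → z ∈ interior (closure (A.openCell (A.signAt z))) :=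
    fun z hz => interior_maximal subset_closure
      (A.isOpen_openCell fun j => by simpa [signAt] using hz j) (A.mem_openCell_signAt z)
  rw [← SignType.mul_eq_neg_one_iff_ne (hsign x hx) (hsign y hy)]
  refine ⟨fun h => ?_, fun h p hp q hq => ?_⟩
  · simpa [signAt, sign_mul] using sign_eq_neg_one_iff.2 (h x (hint x hx) y (hint y hy))
  · rwa [← sign_eq_neg_one_iff, sign_mul, A.sign_val_of_mem_interior_closure hp (hsign x hx),
      A.sign_val_of_mem_interior_closure hq (hsign y hy)]

variable {A}

theorem notMem_sep_trans {C D E : Set 𝔼} (hC : A.IsChamber C) (hD : A.IsChamber D)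
    (hE : A.IsChamber E) {i : ι} (hCD : i ∉ A.sep C D) (hDE : i ∉ A.sep D E) :
    i ∉ A.sep C E := by
  obtain ⟨x, hx, rfl⟩ := hC
  obtain ⟨y, hy, rfl⟩ := hD
  obtain ⟨z, hz, rfl⟩ := hE
  rw [A.mem_sep_iff hx hy, not_not] at hCD
  rw [A.mem_sep_iff hy hz, not_not] at hDE
  rw [A.mem_sep_iff hx hz, not_not]
  exact hCD.trans hDE

theorem notMem_sep_of_mem {C D : Set 𝔼} (hC : A.IsChamber C) (hD : A.IsChamber D) {p : 𝔼}
    (hpC : p ∈ C) (hpD : p ∈ D) {i : ι} (hp : A.val i p ≠ 0) : i ∉ A.sep C D := by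
  obtain ⟨x, hx, rfl⟩ := hC
  obtain ⟨y, hy, rfl⟩ := hD
  rw [A.mem_sep_iff hx hy, not_not]
  exact (A.sign_val_of_mem_closure hpC hp).symm.trans (A.sign_val_of_mem_closure hpD hp)

theorem IsChamber.eq_of_sep_eq_empty {C D : Set 𝔼} (hC : A.IsChamber C) (hD : A.IsChamber D)
    (h : A.sep C D = ∅) : C = D := by
  obtain ⟨x, hx, rfl⟩ := hC
  obtain ⟨y, hy, rfl⟩ := hD
  have hxy : A.signAt x = A.signAt y := funext fun i => by
    have hi : i ∉ A.sep _ _ := h ▸ notMem_empty i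
    rwa [A.mem_sep_iff hx hy, not_not] at hi
  rw [hxy]

theorem supp_mono {F G : Set 𝔼} (h : G ⊆ F) : A.supp F ⊆ A.supp G := fun _ hi => h.trans hi

theorem mem_supp_closure_openCell_iff (y : 𝔼) {i : ι} :
    i ∈ A.supp (closure (A.openCell (A.signAt y))) ↔ A.val i y = 0 := by
  refine ⟨fun h => h (subset_closure (A.mem_openCell_signAt y)), fun h => ?_⟩
  refine closure_minimal (fun z hz => ?_) (isClosed_eq (A.continuous_val i) continuous_const)
  exact sign_eq_zero_iff.1 ((hz i).trans (by simp [signAt, h]))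

theorem IsFace.nonempty {F : Set 𝔼} (hF : A.IsFace F) : F.Nonempty := by
  obtain ⟨y, rfl⟩ := hF
  exact ⟨y, subset_closure (A.mem_openCell_signAt y)⟩

theorem mem_closure_openCell_signCompose (y x : 𝔼) :
    y ∈ closure (A.openCell (signCompose (A.signAt y) (A.signAt x))) :=
  mem_closure_of_tendsto (tendsto_add_smul_sub_nhdsGT y x)
    ((A.eventually_signAt_add_smul_sub y x).mono fun _ ht => A.mem_openCell_iff.2 ht)

theorem IsCF.notMem_sep {C F D : Set 𝔼} (h : A.IsCF C F D) {i : ι} (hi : i ∈ A.supp F) :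
    i ∉ A.sep C D :=
  fun hs => (eq_empty_iff_forall_notMem.1 h.2.2) i ⟨hs, hi⟩

theorem exists_isCF {C F : Set 𝔼} (hC : A.IsChamber C) (hF : A.IsFace F) : ∃ D, A.IsCF C F D := by
  obtain ⟨x, hx, rfl⟩ := hC
  obtain ⟨y, rfl⟩ := hF
  obtain ⟨z, hz⟩ := (closure_nonempty_iff.1 ⟨y, A.mem_closure_openCell_signCompose y x⟩)
  have hzσ := A.mem_openCell_iff.1 hz
  have hz0 : ∀ i, A.val i z ≠ 0 := fun i h0 => by
    have := congrFun hzσ i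
    by_cases hy : A.val i y = 0 <;> simp_all [signAt, signCompose, eq_comm (a := (0 : SignType))]
  refine ⟨_, ⟨z, hz0, rfl⟩, closure_minimal (fun y' hy' => ?_) isClosed_closure, ?_⟩
  · rw [hzσ, ← A.mem_openCell_iff.1 hy']
    exact A.mem_closure_openCell_signCompose y' x
  · refine eq_empty_of_forall_notMem fun i ⟨hs, hi⟩ => ?_
    rw [A.mem_sep_iff hx hz0, hzσ] at hs
    simp [signCompose, signAt, (A.mem_supp_closure_openCell_iff y).1 hi] at hs

theorem IsCF.eq {C F D D' : Set 𝔼} (hC : A.IsChamber C) (hD : A.IsCF C F D)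
    (hD' : A.IsCF C F D') : D = D' := by
  refine hD.1.eq_of_sep_eq_empty hD'.1 (eq_empty_of_forall_notMem fun i => ?_)
  by_cases hi : i ∈ A.supp F
  · exact notMem_sep_trans hD.1 hC hD'.1 (A.sep_comm C D ▸ hD.notMem_sep hi) (hD'.notMem_sep hi)
  · obtain ⟨p, hpF, hp⟩ := not_subset.1 hi
    exact notMem_sep_of_mem hD.1 hD'.1 (hD.2.1 hpF) (hD'.2.1 hpF) hp

theorem IsCF.of_subset {C F G D D' : Set 𝔼} (hC : A.IsChamber C) (hD : A.IsCF C F D)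
    (hD' : A.IsCF C G D') (hGF : G ⊆ F) : A.IsCF D' F D :=
  ⟨hD.1, hD.2.1, eq_empty_of_forall_notMem fun _ ⟨hs, hi⟩ =>
    notMem_sep_trans hD'.1 hC hD.1 (A.sep_comm C D' ▸ hD'.notMem_sep (A.supp_mono hGF hi))
      (hD.notMem_sep hi) hs⟩

theorem IsCF.sep_inter_supp {C C' F D : Set 𝔼} (hC : A.IsChamber C) (hC' : A.IsChamber C')
    (hD : A.IsCF C F D) : A.sep C' D ∩ A.supp F = A.sep C C' ∩ A.supp F := by
  ext i
  refine and_congr_left fun hi => ⟨fun hs => ?_, fun hs => ?_⟩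
  · by_contra h
    exact notMem_sep_trans hC' hC hD.1 (A.sep_comm C C' ▸ h) (hD.notMem_sep hi) hs
  · by_contra h
    exact notMem_sep_trans hC hD.1 hC' (A.sep_comm C D ▸ hD.notMem_sep hi)
      (A.sep_comm C' D ▸ h) hs

variable (A) in
/-- The flat `|F|` of the paper. -/
def supportFlat (F : Set 𝔼) : Set 𝔼 := ⋂ i ∈ A.supp F, A.hyperplane i

theorem subset_supportFlat (F : Set 𝔼) : F ⊆ A.supportFlat F :=
  subset_iInter₂ fun _ hi => hi

theorem supp_supportFlat (F : Set 𝔼) : A.supp (A.supportFlat F) = A.supp F :=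
  (A.supp_mono (subset_supportFlat F)).antisymm fun _ hi => biInter_subset_of_mem hi

theorem isFlat_supportFlat {F : Set 𝔼} (hF : F.Nonempty) : A.IsFlat (A.supportFlat F) :=
  ⟨hF.mono (subset_supportFlat F), _, rfl⟩

/-- Points of `|F|` are reached by prolonging short segments from a point of `F` that stay in
the open face. -/
theorem supportFlat_subset {F : Set 𝔼} (hF : A.IsFace F) {V : AffineSubspace ℝ 𝔼}
    (hFV : F ⊆ V) : A.supportFlat F ⊆ V := by
  obtain ⟨y, rfl⟩ := hF
  intro z hz
  have hyz : ∀ i, A.val i y = 0 → A.val i z = 0 := fun i hi =>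
    mem_iInter₂.1 hz i ((A.mem_supp_closure_openCell_iff y).2 hi)
  obtain ⟨t, hsign, ht⟩ := ((A.eventually_signAt_add_smul_sub y z).and self_mem_nhdsWithin).exists
  have hw : y + t • (z - y) ∈ A.openCell (A.signAt y) := by
    refine A.mem_openCell_iff.2 (hsign.trans (funext fun i => ?_))
    by_cases hi : A.val i y = 0 <;> simp [signCompose, signAt, hi, hyz]
  have hyV : y ∈ V := hFV (subset_closure (A.mem_openCell_signAt y))
  have hzV := AffineMap.lineMap_mem t⁻¹ hyV (hFV (subset_closure hw))
  rwa [AffineMap.lineMap_apply_module', add_sub_cancel_left, smul_smul,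
    inv_mul_cancel₀ ht.ne', one_smul, sub_add_cancel] at hzV

theorem supportFlat_mem_J_iff {lt : Set 𝔼 → Set 𝔼 → Prop} {C F : Set 𝔼} (hF : F.Nonempty) :
    A.supportFlat F ∈ A.J lt C ↔
      ∀ C', A.IsChamber C' → lt C' C → (A.supp F ∩ A.sep C C').Nonempty := by
  simp only [J, mem_ofPred_eq, supp_supportFlat, A.isFlat_supportFlat hF, true_and]

theorem inN_iff_supportFlat_mem_J {lt : Set 𝔼 → Set 𝔼 → Prop} {C : Set 𝔼} (hC : A.IsChamber C)
    {c : A.Cell} (hc : A.inS C c) : A.inN lt C c ↔ A.supportFlat c.F ∈ A.J lt C := by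
  rw [A.supportFlat_mem_J_iff c.isFace.nonempty, inN, and_iff_right hc]
  refine forall₃_congr fun C' hC' _ => ?_
  rw [inS, IsCF, hc.sep_inter_supp hC hC', inter_comm, nonempty_iff_ne_empty]
  simp [c.isChamber, c.faceLe]

theorem inN_iff_subset {lt : Set 𝔼 → Set 𝔼 → Prop} {C : Set 𝔼} (hC : A.IsChamber C)
    {V : AffineSubspace ℝ 𝔼} (hJ : A.J lt C = {X | A.IsFlat X ∧ X ⊆ V}) (c : A.Cell) :
    A.inN lt C c ↔ A.inS C c ∧ c.F ⊆ V := by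
  refine ⟨fun hc => ⟨hc.1, ?_⟩, fun ⟨hc, hcV⟩ => ?_⟩
  · have hmem := (A.inN_iff_supportFlat_mem_J hC hc.1).1 hc
    rw [hJ] at hmem
    exact (A.subset_supportFlat c.F).trans hmem.2
  · rw [A.inN_iff_supportFlat_mem_J hC hc, hJ]
    exact ⟨A.isFlat_supportFlat c.isFace.nonempty, A.supportFlat_subset c.isFace hcV⟩

theorem Cell.ext {c d : A.Cell} (hC : c.C = d.C) (hF : c.F = d.F) : c = d := by
  cases c
  cases d
  congr

end Arrangement

theorem stmt17_general {n : ℕ} {ι : Type} (A : Arrangement n ι)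
    (lt : Set (EuclideanSpace ℝ (Fin n)) → Set (EuclideanSpace ℝ (Fin n)) → Prop)
    (C F_C : Set (EuclideanSpace ℝ (Fin n)))
    (hC : A.IsChamber C)
    (hJ : A.J lt C =
      {X | A.IsFlat X ∧ X ⊆ (affineSpan ℝ F_C : Set (EuclideanSpace ℝ (Fin n)))}) :
    ∃ f : {c : A.Cell // A.inN lt C c} →
        {F : Set (EuclideanSpace ℝ (Fin n)) //
          A.IsFace F ∧ F ⊆ (affineSpan ℝ F_C : Set (EuclideanSpace ℝ (Fin n)))},
      Function.Bijective f ∧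
      (∀ c, (f c : Set (EuclideanSpace ℝ (Fin n))) = (c : A.Cell).F) ∧
      (∀ c c' : {c : A.Cell // A.inN lt C c}, A.cellLE c.val c'.val ↔
        (f c' : Set (EuclideanSpace ℝ (Fin n))) ⊆
          (f c : Set (EuclideanSpace ℝ (Fin n)))) := by
  have hN := A.inN_iff_subset hC hJ
  refine ⟨fun c => ⟨c.1.F, c.1.isFace, ((hN c.1).1 c.2).2⟩, ⟨fun c c' hcc' => ?_, fun F => ?_⟩,
    fun _ => rfl, fun c c' => ⟨And.left, fun h => ⟨h, c.2.1.of_subset hC c'.2.1 h⟩⟩⟩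
  · have hF : c.1.F = c'.1.F := congrArg Subtype.val hcc'
    exact Subtype.ext (Arrangement.Cell.ext (c.2.1.eq hC (hF ▸ c'.2.1)) hF)
  · obtain ⟨D, hD⟩ := A.exists_isCF hC F.2.1
    exact ⟨⟨⟨D, F, hD.1, F.2.1, hD.2.1⟩, (hN _).2 ⟨hD, F.2.2⟩⟩, rfl⟩

/-- For a valid order and a chamber `C`, the subposet `N(C)` of the Salvetti poset is
isomorphic to the face poset of the arrangement restricted to `X_C` (whose faces are the
faces of `A` contained in `X_C`), via `⟨D,F⟩ ↦ F`. -/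
theorem stmt17 {n : ℕ} {ι : Type} (A : Arrangement n ι)
    (lt : Set (EuclideanSpace ℝ (Fin n)) → Set (EuclideanSpace ℝ (Fin n)) → Prop)
    (hvalid : A.IsValidOrder lt)
    (C F_C : Set (EuclideanSpace ℝ (Fin n)))
    (hC : A.IsChamber C) (hFC : A.IsFaceOf F_C C)
    (hJ : A.J lt C =
      {X | A.IsFlat X ∧ X ⊆ (affineSpan ℝ F_C : Set (EuclideanSpace ℝ (Fin n)))}) :
    ∃ f : {c : A.Cell // A.inN lt C c} →
        {F : Set (EuclideanSpace ℝ (Fin n)) //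
          A.IsFace F ∧ F ⊆ (affineSpan ℝ F_C : Set (EuclideanSpace ℝ (Fin n)))},
      Function.Bijective f ∧
      (∀ c, (f c : Set (EuclideanSpace ℝ (Fin n))) = (c : A.Cell).F) ∧
      (∀ c c' : {c : A.Cell // A.inN lt C c}, A.cellLE c.val c'.val ↔
        (f c' : Set (EuclideanSpace ℝ (Fin n))) ⊆
          (f c : Set (EuclideanSpace ℝ (Fin n)))) :=
  stmt17_general A lt C F_C hC hJ
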